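/- 𝒦 ⊆ 𝒫(𝒢) is coherent if and only if there is a nonempty collection 𝔇 of nonempty sets of coherent D's with the finite intersection property (no finite intersection 𝔻₁ ∩ … ∩ 𝔻ₙ of members of 𝔇 is empty) such that B ∈ 𝒦 iff there exist 𝔻₁,…,𝔻ₙ ∈ 𝔇 with B ∩ D ≠ ∅ for every D ∈ 𝔻₁ ∩ … ∩ 𝔻ₙ. -/

import Mathlib

open scoped BigOperators

universe u v

def GambleSpace (Ω : Type v) : Submodule ℝ (Ω → ℝ) where
  carrier := {f | ∃ M, ∀ ω, |f ω| ≤ M}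
  add_mem' := by
    rintro f g ⟨M, hM⟩ ⟨N, hN⟩
    exact ⟨M + N, fun ω => (abs_add_le _ _).trans (add_le_add (hM ω) (hN ω))⟩
  zero_mem' := ⟨0, fun ω => by simp⟩
  smul_mem' := by
    rintro c f ⟨M, hM⟩
    exact ⟨|c| * M, fun ω => by
      simpa [abs_mul] using mul_le_mul_of_nonneg_left (hM ω) (abs_nonneg c)⟩

/-- The type of gambles: bounded functions `Ω → ℝ`. -/
abbrev Gamble (Ω : Type v) := GambleSpace Ω

/-- Pointwise order on gambles: `gle f g` means `f ≤ g` pointwise. -/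
def gle {Ω : Type v} (f g : Gamble Ω) : Prop := ∀ ω, (f : Ω → ℝ) ω ≤ (g : Ω → ℝ) ω

/-- Gambles weakly dominating `0`. -/
def Gpos (Ω : Type v) : Set (Gamble Ω) := {g | gle 0 g ∧ g ≠ 0}

/-- Positive linear hull: finite positive combinations of members of `B`. -/
def posi {Ω : Type v} (B : Set (Gamble Ω)) : Set (Gamble Ω) :=
  {f | ∃ n : ℕ, 0 < n ∧ ∃ (l : Fin n → ℝ) (g : Fin n → Gamble Ω),
    (∀ i, 0 < l i) ∧ (∀ i, g i ∈ B) ∧ f = ∑ i, l i • g i}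

/-- Natural extension of a set of gambles. -/
def desext {Ω : Type v} (E : Set (Gamble Ω)) : Set (Gamble Ω) := posi (E ∪ Gpos Ω)

/-- Coherence for a set of desirable gambles. -/
def CoherentD {Ω : Type v} (D : Set (Gamble Ω)) : Prop :=
  (0 : Gamble Ω) ∉ D ∧ Gpos Ω ⊆ D ∧
  (∀ g ∈ D, ∀ l : ℝ, 0 < l → l • g ∈ D) ∧
  (∀ f ∈ D, ∀ g ∈ D, f + g ∈ D)

/-- Coherence for a set of desirable gamble sets. -/
def CoherentK {Ω : Type v} (K : Set (Set (Gamble Ω))) : Prop :=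
  (∅ : Set (Gamble Ω)) ∉ K ∧
  (∀ A ∈ K, A \ {0} ∈ K) ∧
  (∀ g ∈ Gpos Ω, ({g} : Set (Gamble Ω)) ∈ K) ∧
  (∀ A ∈ K, ∀ B : Set (Gamble Ω), A ⊆ B → B ∈ K) ∧
  (∀ A ∈ K, ∀ F : Gamble Ω → Gamble Ω, (∀ g ∈ A, gle g (F g)) → F '' A ∈ K) ∧
  (∀ n : ℕ, 0 < n → ∀ A : Fin n → Set (Gamble Ω), (∀ i, A i ∈ K) →
    ∀ F : (Fin n → Gamble Ω) → Gamble Ω,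
    (∀ g : Fin n → Gamble Ω, (∀ i, g i ∈ A i) → F g ∈ posi (Set.range g)) →
    {b | ∃ g : Fin n → Gamble Ω, (∀ i, g i ∈ A i) ∧ b = F g} ∈ K)

/-- The infinite addition axiom. -/
def KAddInf {Ω : Type v} (K : Set (Set (Gamble Ω))) : Prop :=
  ∀ (I : Type v) (A : I → Set (Gamble Ω)), (∀ i, A i ∈ K) →
    ∀ F : (I → Gamble Ω) → Gamble Ω,
    (∀ g : I → Gamble Ω, (∀ i, g i ∈ A i) → F g ∈ posi (Set.range g)) →
    {b | ∃ g : I → Gamble Ω, (∀ i, g i ∈ A i) ∧ b = F g} ∈ K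

/-- Natural extension of a set of gamble sets (nonempty case). -/
def ExtK {Ω : Type v} (𝒜 : Set (Set (Gamble Ω))) : Set (Set (Gamble Ω)) :=
  {B | ∃ n : ℕ, 0 < n ∧ ∃ A : Fin n → Set (Gamble Ω), (∀ i, A i ∈ 𝒜) ∧
    ∀ g : Fin n → Gamble Ω, (∀ i, g i ∈ A i) →
      (0 : Gamble Ω) ∉ desext (Set.range g) → ∃ f ∈ B, f ∈ desext (Set.range g)}

/-!
A coherent `K` is represented by the families `{D coherent | B ∩ D ≠ ∅}`, `B ∈ K`. The substantial
point is that `B ∈ K` as soon as every coherent `D` meeting `A₁, …, Aₙ ∈ K` meets `B`, where we may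
assume `B` contains no positive gamble. For each selection `gᵢ ∈ Aᵢ` the natural extension of
`{g₁, …, gₙ}` either contains `0` or is a coherent set meeting every `Aᵢ`, hence contains some
`f ∈ B`; either way a non-positive element of it dominates a positive combination `p` of the `gᵢ`.
Finite addition collects these `p` into a member of `K`; the dominator axiom moves each `p` up to
`0` or into `B`, and removing `0` leaves a subset of `B`. Conversely, each axiom of `K` holds on
every coherent `D` separately, and the finite intersection property transfers it to the family
represented by `𝔇`.
-/

open Set

variable {Ω : Type v}

instance : PosSMulMono ℝ (Gamble Ω) :=
  ⟨fun l hl f g hfg ω => by simpa using mul_le_mul_of_nonneg_left (hfg ω) hl⟩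

instance : PosSMulStrictMono ℝ (Gamble Ω) :=
  PosSMulMono.toPosSMulStrictMono (α := ℝ) (β := Gamble Ω)

lemma mem_Gpos_iff_pos {g : Gamble Ω} : g ∈ Gpos Ω ↔ 0 < g := by
  rw [lt_iff_le_and_ne, ne_comm]
  rfl

lemma Gpos_nonempty [Nonempty Ω] : (Gpos Ω).Nonempty := by
  obtain ⟨ω⟩ := ‹Nonempty Ω›
  refine ⟨⟨fun _ => 1, 1, fun _ => by simp⟩, fun _ => zero_le_one, fun h => ?_⟩
  simpa using congrFun (congrArg Subtype.val h) ω

section Posi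

variable {S : Set (Gamble Ω)}

lemma subset_posi (S : Set (Gamble Ω)) : S ⊆ posi S :=
  fun g hg => ⟨1, one_pos, fun _ => 1, fun _ => g, fun _ => one_pos, fun _ => hg, by simp⟩

lemma smul_mem_posi {f : Gamble Ω} (hf : f ∈ posi S) {l : ℝ} (hl : 0 < l) : l • f ∈ posi S := by
  obtain ⟨n, hn, c, g, hc, hg, rfl⟩ := hf
  exact ⟨n, hn, fun i => l * c i, g, fun i => mul_pos hl (hc i), hg,
    by simp [Finset.smul_sum, smul_smul]⟩

lemma add_mem_posi {f f' : Gamble Ω} (hf : f ∈ posi S) (hf' : f' ∈ posi S) :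
    f + f' ∈ posi S := by
  obtain ⟨n, hn, c, g, hc, hg, rfl⟩ := hf
  obtain ⟨n', -, c', g', hc', hg', rfl⟩ := hf'
  refine ⟨n + n', by omega, Fin.append c c', Fin.append g g',
    fun i => i.addCases (by simpa using hc) (by simpa using hc'),
    fun i => i.addCases (by simpa using hg) (by simpa using hg'), ?_⟩
  simp [Fin.sum_univ_add]

lemma posi_subset {D : Set (Gamble Ω)} (hsmul : ∀ g ∈ D, ∀ l : ℝ, 0 < l → l • g ∈ D)
    (hadd : ∀ f ∈ D, ∀ g ∈ D, f + g ∈ D) (hS : S ⊆ D) : posi S ⊆ D := by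
  rintro _ ⟨n, hn, c, g, hc, hg, rfl⟩
  induction n with
  | zero => exact absurd hn (lt_irrefl 0)
  | succ n ih =>
    rw [Fin.sum_univ_succ]
    have hhead := hsmul _ (hS (hg 0)) _ (hc 0)
    rcases n.eq_zero_or_pos with rfl | hn'
    · simpa using hhead
    · exact hadd _ hhead _ (ih hn' (c ∘ Fin.succ) (g ∘ Fin.succ) (fun _ => hc _) fun _ => hg _)

lemma subset_desext : S ⊆ desext S :=
  (subset_union_left).trans (subset_posi _)

lemma pos_or_exists_posi_le_of_mem_desext {f : Gamble Ω} (hf : f ∈ desext S) :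
    0 < f ∨ ∃ p ∈ posi S, p ≤ f := by
  refine posi_subset (D := {f | 0 < f ∨ ∃ p ∈ posi S, p ≤ f}) ?_ ?_ ?_ hf
  · rintro g (hg | ⟨p, hp, hpg⟩) l hl
    · exact .inl (smul_pos hl hg)
    · exact .inr ⟨l • p, smul_mem_posi hp hl, smul_le_smul_of_nonneg_left hpg hl.le⟩
  · rintro f (hf | ⟨p, hp, hpf⟩) g (hg | ⟨q, hq, hqg⟩)
    · exact .inl (add_pos hf hg)
    · exact .inr ⟨q, hq, le_add_of_nonneg_of_le hf.le hqg⟩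
    · exact .inr ⟨p, hp, le_add_of_le_of_nonneg hpf hg.le⟩
    · exact .inr ⟨p + q, add_mem_posi hp hq, add_le_add hpf hqg⟩
  · rintro g (hg | hg)
    · exact .inr ⟨g, subset_posi S hg, le_rfl⟩
    · exact .inl (mem_Gpos_iff_pos.1 hg)

end Posi

section CoherentD

variable {D : Set (Gamble Ω)}

lemma CoherentD.posi_subset (hD : CoherentD D) {S : Set (Gamble Ω)} (hS : S ⊆ D) :
    posi S ⊆ D :=
  _root_.posi_subset hD.2.2.1 hD.2.2.2 hS

lemma CoherentD.mem_of_le (hD : CoherentD D) {f g : Gamble Ω} (hf : f ∈ D) (hfg : f ≤ g) :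
    g ∈ D := by
  rcases hfg.eq_or_lt with rfl | hlt
  · exact hf
  · simpa using hD.2.2.2 f hf _ (hD.2.1 (mem_Gpos_iff_pos.2 (sub_pos.2 hlt)))

lemma coherentD_desext {S : Set (Gamble Ω)} (h0 : (0 : Gamble Ω) ∉ desext S) :
    CoherentD (desext S) :=
  ⟨h0, (subset_union_right).trans (subset_posi _), fun _ hg _ hl => smul_mem_posi hg hl,
    fun _ hf _ hg => add_mem_posi hf hg⟩

end CoherentD

section CoherentK

variable {K : Set (Set (Gamble Ω))}

lemma CoherentK.mem_of_forall_exists_posi (hK : CoherentK K) {n : ℕ} (hn : 0 < n)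
    {A : Fin n → Set (Gamble Ω)} (hA : ∀ i, A i ∈ K) {P : Gamble Ω → Prop}
    (h : ∀ g : Fin n → Gamble Ω, (∀ i, g i ∈ A i) → ∃ p ∈ posi (range g), P p) :
    {p | P p} ∈ K := by
  choose! F hF hPF using h
  refine hK.2.2.2.1 _ (hK.2.2.2.2.2 n hn A hA F hF) _ ?_
  rintro _ ⟨g, hg, rfl⟩
  exact hPF g hg

lemma CoherentK.mem_of_forall_le (hK : CoherentK K) {A B : Set (Gamble Ω)} (hA : A ∈ K)
    (h : ∀ a ∈ A, ∃ b ∈ insert 0 B, a ≤ b) : B ∈ K := by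
  choose! G hGB hG using h
  refine hK.2.2.2.1 _ (hK.2.1 _ (hK.2.2.2.2.1 A hA G hG)) B ?_
  rintro _ ⟨⟨a, ha, rfl⟩, hne⟩
  exact (hGB a ha).resolve_left hne

lemma CoherentK.mem_of_forall_exists_posi_le (hK : CoherentK K) {n : ℕ} (hn : 0 < n)
    {A : Fin n → Set (Gamble Ω)} (hA : ∀ i, A i ∈ K) {B : Set (Gamble Ω)}
    (h : ∀ g : Fin n → Gamble Ω, (∀ i, g i ∈ A i) → ∃ p ∈ posi (range g), ∃ b ∈ insert 0 B, p ≤ b) :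
    B ∈ K :=
  hK.mem_of_forall_le (hK.mem_of_forall_exists_posi hn hA h) fun _ => id

end CoherentK

def meetingCoherent (B : Set (Gamble Ω)) : Set (Set (Gamble Ω)) :=
  {D | CoherentD D ∧ (B ∩ D).Nonempty}

def representedK (𝔇 : Set (Set (Set (Gamble Ω)))) : Set (Set (Gamble Ω)) :=
  {B | ∃ n : ℕ, 0 < n ∧ ∃ Ds : Fin n → Set (Set (Gamble Ω)),
    (∀ i, Ds i ∈ 𝔇) ∧ ∀ D ∈ ⋂ i, Ds i, (B ∩ D).Nonempty}

section Representation

variable {𝔇 : Set (Set (Set (Gamble Ω)))}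

lemma empty_notMem_representedK_iff :
    ∅ ∉ representedK 𝔇 ↔ ∀ n : ℕ, 0 < n → ∀ Ds : Fin n → Set (Set (Gamble Ω)),
      (∀ i, Ds i ∈ 𝔇) → (⋂ i, Ds i).Nonempty := by
  simp [representedK, Set.nonempty_iff_ne_empty, Set.eq_empty_iff_forall_notMem]

lemma coherentD_of_mem_iInter (hcoh : ∀ 𝔻 ∈ 𝔇, ∀ D ∈ 𝔻, CoherentD D) {n : ℕ} (hn : 0 < n)
    {Ds : Fin n → Set (Set (Gamble Ω))} (hDs : ∀ i, Ds i ∈ 𝔇) {D : Set (Gamble Ω)}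
    (hD : D ∈ ⋂ i, Ds i) : CoherentD D :=
  hcoh _ (hDs ⟨0, hn⟩) D (mem_iInter.1 hD _)

lemma mem_representedK_of_forall_coherentD (hcoh : ∀ 𝔻 ∈ 𝔇, ∀ D ∈ 𝔻, CoherentD D)
    {A B : Set (Gamble Ω)} (hA : A ∈ representedK 𝔇)
    (h : ∀ D, CoherentD D → (A ∩ D).Nonempty → (B ∩ D).Nonempty) : B ∈ representedK 𝔇 := by
  obtain ⟨n, hn, Ds, hDs, hA⟩ := hA
  exact ⟨n, hn, Ds, hDs, fun D hD => h D (coherentD_of_mem_iInter hcoh hn hDs hD) (hA D hD)⟩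

lemma exists_fin_iInter_eq_iInter_iInter {α : Type*} {𝔖 : Set (Set α)} {n : ℕ} (hn : 0 < n)
    {m : Fin n → ℕ} (hm : ∀ i, 0 < m i) {T : ∀ i, Fin (m i) → Set α} (hT : ∀ i k, T i k ∈ 𝔖) :
    ∃ N, 0 < N ∧ ∃ U : Fin N → Set α, (∀ j, U j ∈ 𝔖) ∧ ⋂ j, U j = ⋂ i, ⋂ k, T i k := by
  let e := Fintype.equivFin (Σ i, Fin (m i))
  have : Nonempty (Σ i, Fin (m i)) := ⟨⟨⟨0, hn⟩, ⟨0, hm _⟩⟩⟩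
  refine ⟨_, Fintype.card_pos, fun j => T (e.symm j).1 (e.symm j).2, fun j => hT _ _, ?_⟩
  rw [← iInter_sigma (s := fun p : Σ i, Fin (m i) => T p.1 p.2)]
  exact e.symm.surjective.iInter_comp fun p => T p.1 p.2

lemma coherentK_representedK (h𝔇 : 𝔇.Nonempty) (hcoh : ∀ 𝔻 ∈ 𝔇, ∀ D ∈ 𝔻, CoherentD D)
    (hFIP : ∀ n : ℕ, 0 < n → ∀ Ds : Fin n → Set (Set (Gamble Ω)),
      (∀ i, Ds i ∈ 𝔇) → (⋂ i, Ds i).Nonempty) :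
    CoherentK (representedK 𝔇) := by
  refine ⟨empty_notMem_representedK_iff.2 hFIP, ?_, ?_, ?_, ?_, ?_⟩
  · exact fun A hA => mem_representedK_of_forall_coherentD hcoh hA fun D hD ⟨f, hfA, hfD⟩ =>
      ⟨f, ⟨hfA, ne_of_mem_of_not_mem hfD hD.1⟩, hfD⟩
  · intro g hg
    obtain ⟨𝔻, h𝔻⟩ := h𝔇
    exact ⟨1, one_pos, fun _ => 𝔻, fun _ => h𝔻, fun D hD =>
      ⟨g, rfl, (coherentD_of_mem_iInter hcoh one_pos (fun _ => h𝔻) hD).2.1 hg⟩⟩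
  · exact fun A hA B hAB => mem_representedK_of_forall_coherentD hcoh hA fun _ _ =>
      Nonempty.mono (inter_subset_inter_left _ hAB)
  · exact fun A hA F hF => mem_representedK_of_forall_coherentD hcoh hA fun D hD ⟨g, hgA, hgD⟩ =>
      ⟨F g, mem_image_of_mem F hgA, hD.mem_of_le hgD (hF g hgA)⟩
  · intro n hn A hA F hF
    choose m hm T hT hAT using hA
    obtain ⟨N, hN, U, hU, hUT⟩ := exists_fin_iInter_eq_iInter_iInter hn hm hT
    refine ⟨N, hN, U, hU, fun D hD => ?_⟩
    have hDT : ∀ i, D ∈ ⋂ k, T i k := mem_iInter.1 (hUT ▸ hD)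
    choose g hgA hgD using fun i => hAT i D (hDT i)
    exact ⟨F g, ⟨g, hgA, rfl⟩, (coherentD_of_mem_iInter hcoh hN hU hD).posi_subset
      (range_subset_iff.2 hgD) (hF g hgA)⟩

lemma desext_mem_iInter_meetingCoherent {n : ℕ} {A : Fin n → Set (Gamble Ω)}
    {g : Fin n → Gamble Ω} (hg : ∀ i, g i ∈ A i) (h0 : (0 : Gamble Ω) ∉ desext (range g)) :
    desext (range g) ∈ ⋂ i, meetingCoherent (A i) :=
  mem_iInter.2 fun i => ⟨coherentD_desext h0, g i, hg i, subset_desext (mem_range_self i)⟩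

lemma CoherentK.representedK_image_meetingCoherent {K : Set (Set (Gamble Ω))} (hK : CoherentK K) :
    representedK (meetingCoherent '' K) = K := by
  ext B
  refine ⟨fun ⟨n, hn, Ds, hDs, hB⟩ => ?_, fun hB => ⟨1, one_pos, fun _ => meetingCoherent B,
    fun _ => mem_image_of_mem _ hB, fun D hD => (mem_iInter.1 hD 0).2⟩⟩
  by_cases hBpos : ∃ f ∈ B, 0 < f
  · obtain ⟨f, hfB, hf⟩ := hBpos
    exact hK.2.2.2.1 _ (hK.2.2.1 f (mem_Gpos_iff_pos.2 hf)) B (singleton_subset_iff.2 hfB)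
  push Not at hBpos
  choose A hA hADs using hDs
  obtain rfl : Ds = fun i => meetingCoherent (A i) := funext fun i => (hADs i).symm
  refine hK.mem_of_forall_exists_posi_le hn hA fun g hg => ?_
  obtain ⟨f, hf, hfg⟩ : ∃ f ∈ insert 0 B, f ∈ desext (range g) := by
    by_cases h0 : (0 : Gamble Ω) ∈ desext (range g)
    · exact ⟨0, mem_insert _ _, h0⟩
    · obtain ⟨f, hfB, hf⟩ := hB _ (desext_mem_iInter_meetingCoherent hg h0)
      exact ⟨f, mem_insert_of_mem _ hfB, hf⟩
  have hf_not_pos : ¬ 0 < f := by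
    rcases hf with rfl | hfB
    exacts [lt_irrefl 0, hBpos f hfB]
  obtain ⟨p, hp, hpf⟩ := (pos_or_exists_posi_le_of_mem_desext hfg).resolve_left hf_not_pos
  exact ⟨p, hp, f, hf, hpf⟩

end Representation

theorem stmt18 {Ω : Type v} [Nonempty Ω] (K : Set (Set (Gamble Ω))) :
    CoherentK K ↔
    ∃ 𝔇 : Set (Set (Set (Gamble Ω))),
      𝔇.Nonempty ∧
      (∀ 𝔻 ∈ 𝔇, 𝔻.Nonempty ∧ ∀ D ∈ 𝔻, CoherentD D) ∧
      (∀ n : ℕ, 0 < n → ∀ Ds : Fin n → Set (Set (Gamble Ω)),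
        (∀ i, Ds i ∈ 𝔇) → (⋂ i, Ds i).Nonempty) ∧
      (∀ B : Set (Gamble Ω),
        B ∈ K ↔ ∃ n : ℕ, 0 < n ∧ ∃ Ds : Fin n → Set (Set (Gamble Ω)),
          (∀ i, Ds i ∈ 𝔇) ∧ ∀ D ∈ ⋂ i, Ds i, (B ∩ D).Nonempty) := by
  constructor
  · intro hK
    have hrep := hK.representedK_image_meetingCoherent
    have hFIP := empty_notMem_representedK_iff.1 (hrep ▸ hK.1)
    obtain ⟨g, hg⟩ := Gpos_nonempty (Ω := Ω)
    refine ⟨meetingCoherent '' K, ⟨_, mem_image_of_mem _ (hK.2.2.1 g hg)⟩,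
      fun 𝔻 h𝔻 => ⟨?_, ?_⟩, hFIP, fun B => (Set.ext_iff.1 hrep B).symm⟩
    · exact (hFIP 1 one_pos (fun _ => 𝔻) fun _ => h𝔻).mono (iInter_subset _ 0)
    · obtain ⟨B, -, rfl⟩ := h𝔻
      exact fun D hD => hD.1
  · rintro ⟨𝔇, h𝔇, h𝔇coh, hFIP, hK⟩
    obtain rfl : K = representedK 𝔇 := Set.ext hK
    exact coherentK_representedK h𝔇 (fun 𝔻 h𝔻 => (h𝔇coh 𝔻 h𝔻).2) hFIP
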